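/- Let q be a positive integer. For any reals φ₁,…,φ_N and non-negative reals a₁,…,a_N, and any T > 0 and real T₀, (1/(2T)) ∫_{|t − T₀| ≤ T} |∑_{n=1}^N a_n e^{i t φ_n}|^{2q} dt can be bounded below: there is a constant c_q > 0 (depending only on q) with c_q (∑_{n=1}^N a_n²)^q ≤ (3/(2T)) ∫_{|t| ≤ T} |∑_{n=1}^N a_n e^{i t φ_n}|^{2q} dt, hence also the lower bound holds for the integral over any interval containing [−T, T]. -/

import Mathlib

/-!
Write `f t = ∑ aₙ e^{i t φₙ}`. Expanding `|f (u - v)|²` and integrating over the square `[0, T]²`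
gives `∑_{m,n} a_m a_n |∫₀ᵀ e^{i u (φ_m - φ_n)} du|²`, which is at least its diagonal `T² ∑ aₙ²`
because the `aₙ` are non-negative. For each `v ∈ [0, T]` the `u`-integral runs over a subinterval
of `[-T, T]`, so the double integral is at most `T ∫_{-T}^{T} |f|²`. Hence the mean of `|f|²` over
`[-T, T]` is at least `½ ∑ aₙ²`, and Jensen's inequality for `x ↦ x ^ q` passes this on to
`|f|^{2q}`, with `c_q = 2^{-q}`.
-/

open MeasureTheory Complex
open scoped ComplexConjugate

theorem pow_intervalAverage_le (q : ℕ) {a b : ℝ} (hab : a < b) {g : ℝ → ℝ}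
    (hg : Continuous g) (hg0 : ∀ t, 0 ≤ g t) :
    (⨍ t in a..b, g t) ^ q ≤ ⨍ t in a..b, g t ^ q :=
  (convexOn_pow q).map_set_average_le (continuous_pow q).continuousOn isClosed_Ici
    (by simp [(sub_pos.2 hab).ne']) (by simp) (.of_forall hg0) hg.integrableOn_uIoc
    (hg.pow q).integrableOn_uIoc

theorem integral_integral_sub_le {g : ℝ → ℝ} (hg : Continuous g) (hg0 : ∀ t, 0 ≤ g t)
    {T : ℝ} (hT : 0 ≤ T) :
    ∫ v in (0)..T, ∫ u in (0)..T, g (u - v) ≤ T * ∫ t in (-T)..T, g t := by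
  have hinner : Continuous fun v ↦ ∫ u in (0)..T, g (u - v) :=
    intervalIntegral.continuous_parametric_intervalIntegral_of_continuous' (by fun_prop) _ _
  calc ∫ v in (0)..T, ∫ u in (0)..T, g (u - v)
      ≤ ∫ _ in (0)..T, ∫ t in (-T)..T, g t := by
        refine intervalIntegral.integral_mono_on hT (hinner.intervalIntegrable _ _)
          intervalIntegrable_const fun v hv ↦ ?_
        rw [intervalIntegral.integral_comp_sub_right, zero_sub]
        exact intervalIntegral.integral_mono_interval (by linarith [hv.2]) (by linarith [hv.1])
          (by linarith [hv.1]) (.of_forall hg0) (hg.intervalIntegrable _ _)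
    _ = T * ∫ t in (-T)..T, g t := by simp

theorem integral_integral_sum_mul_conj {κ : Type*} (s : Finset κ) (c : κ → ℂ)
    {F : κ → ℝ → ℂ} (hF : ∀ k, Continuous (F k)) (a b : ℝ) :
    ∫ v in a..b, ∫ u in a..b, ∑ k ∈ s, c k * (F k u * conj (F k v)) =
      ∑ k ∈ s, c k * ((∫ u in a..b, F k u) * conj (∫ u in a..b, F k u)) := by
  have hinner (v : ℝ) : ∫ u in a..b, ∑ k ∈ s, c k * (F k u * conj (F k v)) =
      ∑ k ∈ s, c k * ((∫ u in a..b, F k u) * conj (F k v)) := by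
    rw [intervalIntegral.integral_finsetSum fun k _ ↦
      by apply Continuous.intervalIntegrable; fun_prop]
    simp only [intervalIntegral.integral_const_mul, intervalIntegral.integral_mul_const]
  simp_rw [hinner]
  rw [intervalIntegral.integral_finsetSum fun k _ ↦
    by apply Continuous.intervalIntegrable; fun_prop]
  simp only [intervalIntegral.integral_const_mul, intervalIntegral.intervalIntegral_conj]

noncomputable def expSum {ι : Type*} [Fintype ι] (a φ : ι → ℝ) (t : ℝ) : ℂ :=
  ∑ n, (a n : ℂ) * exp (I * t * φ n)

section expSum

variable {ι : Type*} [Fintype ι] (a φ : ι → ℝ)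

@[fun_prop]
theorem continuous_expSum : Continuous (expSum a φ) := by
  unfold expSum; fun_prop

theorem expSum_sub_mul_conj (u v : ℝ) :
    expSum a φ (u - v) * conj (expSum a φ (u - v)) =
      ∑ m, ∑ n, (a m * a n : ℂ) *
        (exp (I * u * (φ m - φ n)) * conj (exp (I * v * (φ m - φ n)))) := by
  simp only [expSum, map_sum, map_mul, conj_ofReal, ← exp_conj, conj_I, Finset.sum_mul_sum]
  refine Finset.sum_congr rfl fun m _ ↦ Finset.sum_congr rfl fun n _ ↦ ?_
  rw [mul_mul_mul_comm, ← exp_add, ← exp_add]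
  congr 2
  simp only [map_sub, conj_ofReal]
  push_cast
  ring

theorem integral_integral_norm_expSum_sub_sq (T : ℝ) :
    ∫ v in (0)..T, ∫ u in (0)..T, ‖expSum a φ (u - v)‖ ^ 2 =
      ∑ m, ∑ n, a m * a n * ‖∫ u in (0)..T, exp (I * u * (φ m - φ n))‖ ^ 2 := by
  apply ofReal_injective
  push_cast
  simp_rw [← intervalIntegral.integral_ofReal, ofReal_pow, ← mul_conj', expSum_sub_mul_conj]
  simp only [← Finset.sum_product']
  exact integral_integral_sum_mul_conj _ _ (fun _ ↦ by fun_prop) _ _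

theorem mul_sum_sq_le_integral_norm_expSum_sq (ha : ∀ n, 0 ≤ a n) {T : ℝ} (hT : 0 < T) :
    T * ∑ n, a n ^ 2 ≤ ∫ t in (-T)..T, ‖expSum a φ t‖ ^ 2 := by
  have hdiag (n : ι) : ‖∫ u in (0)..T, exp (I * u * (φ n - φ n))‖ = T := by
    simp [hT.le]
  refine le_of_mul_le_mul_left ?_ hT
  calc T * (T * ∑ n, a n ^ 2)
      = ∑ n, a n * a n * ‖∫ u in (0)..T, exp (I * u * (φ n - φ n))‖ ^ 2 := by
        simp only [hdiag, Finset.mul_sum]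
        exact Finset.sum_congr rfl fun _ _ ↦ by ring
    _ ≤ ∑ m, ∑ n, a m * a n * ‖∫ u in (0)..T, exp (I * u * (φ m - φ n))‖ ^ 2 :=
        Finset.sum_le_sum fun m _ ↦ Finset.single_le_sum
          (f := fun n ↦ a m * a n * ‖∫ u in (0)..T, exp (I * u * (φ m - φ n))‖ ^ 2)
          (fun n _ ↦ by have := ha m; have := ha n; positivity) (Finset.mem_univ m)
    _ = ∫ v in (0)..T, ∫ u in (0)..T, ‖expSum a φ (u - v)‖ ^ 2 :=
        (integral_integral_norm_expSum_sub_sq a φ T).symm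
    _ ≤ T * ∫ t in (-T)..T, ‖expSum a φ t‖ ^ 2 :=
        integral_integral_sub_le (g := fun t ↦ ‖expSum a φ t‖ ^ 2) (by fun_prop)
          (fun _ ↦ by positivity) hT.le

theorem pow_sum_sq_le_average_norm_expSum_pow (q : ℕ) (ha : ∀ n, 0 ≤ a n) {T : ℝ}
    (hT : 0 < T) :
    (1 / 2) ^ q * (∑ n, a n ^ 2) ^ q ≤ ⨍ t in (-T)..T, ‖expSum a φ t‖ ^ (2 * q) :=
  calc (1 / 2) ^ q * (∑ n, a n ^ 2) ^ q = ((2 * T)⁻¹ * (T * ∑ n, a n ^ 2)) ^ q := by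
        rw [← mul_pow]; field_simp
    _ ≤ (⨍ t in (-T)..T, ‖expSum a φ t‖ ^ 2) ^ q := by
        rw [interval_average_eq, smul_eq_mul, sub_neg_eq_add, ← two_mul]
        gcongr
        exact mul_sum_sq_le_integral_norm_expSum_sq a φ ha hT
    _ ≤ ⨍ t in (-T)..T, (‖expSum a φ t‖ ^ 2) ^ q :=
        pow_intervalAverage_le q (by linarith) (by fun_prop) fun _ ↦ by positivity
    _ = ⨍ t in (-T)..T, ‖expSum a φ t‖ ^ (2 * q) := by simp only [pow_mul]

end expSum

theorem stmt_18_general (q : ℕ) :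
    ∃ c : ℝ, 0 < c ∧ ∀ (N : ℕ) (φ : Fin N → ℝ) (a : Fin N → ℝ),
      (∀ n, 0 ≤ a n) → ∀ T : ℝ, 0 < T →
      c * (∑ n, (a n) ^ 2) ^ q ≤
          (3 / (2 * T)) *
            ∫ t in (-T)..T, ‖∑ n, (a n : ℂ) * Complex.exp (Complex.I * t * φ n)‖ ^ (2 * q) ∧
        ∀ A B : ℝ, A ≤ -T → T ≤ B →
          c * (∑ n, (a n) ^ 2) ^ q ≤
            (3 / (2 * T)) *
              ∫ t in A..B, ‖∑ n, (a n : ℂ) * Complex.exp (Complex.I * t * φ n)‖ ^ (2 * q) := by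
  refine ⟨(1 / 2) ^ q, by positivity, fun N φ a ha T hT ↦ ?_⟩
  have hbound : (1 / 2) ^ q * (∑ n, a n ^ 2) ^ q ≤
      3 / (2 * T) * ∫ t in (-T)..T, ‖expSum a φ t‖ ^ (2 * q) := by
    refine (pow_sum_sq_le_average_norm_expSum_pow a φ q ha hT).trans ?_
    rw [interval_average_eq, smul_eq_mul, sub_neg_eq_add, ← two_mul, inv_eq_one_div]
    gcongr
    · exact intervalIntegral.integral_nonneg (by linarith) fun _ _ ↦ by positivity
    · norm_num
  refine ⟨hbound, fun A B hA hB ↦ hbound.trans ?_⟩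
  gcongr
  exact intervalIntegral.integral_mono_interval hA (by linarith) hB
    (.of_forall fun _ ↦ by positivity) (Continuous.intervalIntegrable (by fun_prop) _ _)

theorem stmt_18 (q : ℕ) (hq : 0 < q) :
    ∃ c : ℝ, 0 < c ∧ ∀ (N : ℕ) (φ : Fin N → ℝ) (a : Fin N → ℝ),
      (∀ n, 0 ≤ a n) → ∀ T : ℝ, 0 < T →
      c * (∑ n, (a n) ^ 2) ^ q ≤
          (3 / (2 * T)) *
            ∫ t in (-T)..T, ‖∑ n, (a n : ℂ) * Complex.exp (Complex.I * t * φ n)‖ ^ (2 * q) ∧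
        ∀ A B : ℝ, A ≤ -T → T ≤ B →
          c * (∑ n, (a n) ^ 2) ^ q ≤
            (3 / (2 * T)) *
              ∫ t in A..B, ‖∑ n, (a n : ℂ) * Complex.exp (Complex.I * t * φ n)‖ ^ (2 * q) :=
  stmt_18_general q
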